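/- Any 3-dimensional subspace N of W × F_16 with d_S(N, G(a_0,a_1)) ≥ 4 for all a_0,a_1 ∈ F_16 must satisfy dim(N ∩ ({0} × F_16)) ≥ 1; i.e., a (7,M,4;3) code containing the full lifted Gabidulin code can only be extended by subspaces meeting the special solid S in at least a point. -/

import Mathlib

/-!
If `N ∩ S = 0`, the first projection embeds `N` into `W ⊆ F_16`, so two independent vectors
`(u, p), (v, q)` of `N` have distinct nonzero first coordinates. The system
`a₀u + a₁u² = p, a₀v + a₁v² = q` has determinant `uv(v - u) ≠ 0`, so some codeword `G(a₀, a₁)`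
contains both vectors. Then `dim (N ∩ G) ≥ 2` and `dim G = dim W ≤ 4`, hence
`d_S(N, G) = 3 + dim G - 2 dim (N ∩ G) ≤ 3`.
-/

/-- The field `F_16`, a `4`-dimensional vector space over `F_2`. -/
abbrev F16 := GaloisField 2 4

/-- The `F_2`-linear endomorphism of `F_16` induced by `a_0 x + a_1 x^2`. -/
noncomputable def lmap (a0 a1 : F16) : F16 →ₗ[ZMod 2] F16 where
  toFun x := a0 * x + a1 * x ^ 2
  map_add' x y := by
    have h : (x + y) ^ 2 = x ^ 2 + y ^ 2 := CharTwo.add_sq x y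
    show a0 * (x + y) + a1 * (x + y) ^ 2 = a0 * x + a1 * x ^ 2 + (a0 * y + a1 * y ^ 2)
    rw [h]; ring
  map_smul' c x := by
    have hc : c = 0 ∨ c = 1 := by revert c; decide
    rcases hc with rfl | rfl <;> simp

/-- The codeword `G(a_0, a_1) = {(x, a_0 x + a_1 x^2) : x ∈ W}`, as a subspace of
`W × F_16`. -/
noncomputable def Gc (W : Submodule (ZMod 2) F16) (a0 a1 : F16) :
    Submodule (ZMod 2) (↥W × F16) :=
  LinearMap.graph ((lmap a0 a1).comp W.subtype)

/-- The special solid `S = {0} × F_16` inside `W × F_16`. -/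
noncomputable def specialSolid (W : Submodule (ZMod 2) F16) :
    Submodule (ZMod 2) (↥W × F16) :=
  (⊥ : Submodule (ZMod 2) ↥W).prod (⊤ : Submodule (ZMod 2) F16)

theorem exists_mul_add_mul_sq_eq {K : Type*} [Field K] {u v : K} (hu : u ≠ 0) (hv : v ≠ 0)
    (huv : u ≠ v) (p q : K) :
    ∃ a0 a1 : K, a0 * u + a1 * u ^ 2 = p ∧ a0 * v + a1 * v ^ 2 = q := by
  have hvu : v - u ≠ 0 := sub_ne_zero.mpr huv.symm
  refine ⟨(p * v ^ 2 - q * u ^ 2) / (u * v * (v - u)), (q * u - p * v) / (u * v * (v - u)),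
    ?_, ?_⟩ <;> field_simp <;> ring

theorem two_le_finrank_of_linearIndependent_pair {K V : Type*} [DivisionRing K]
    [AddCommGroup V] [Module K V] {P : Submodule K V} [FiniteDimensional K P] {x y : V}
    (hx : x ∈ P) (hy : y ∈ P) (hxy : LinearIndependent K ![x, y]) : 2 ≤ Module.finrank K P := by
  have hspan : Submodule.span K (Set.range ![x, y]) ≤ P := by
    rw [Submodule.span_le, Matrix.range_cons, Matrix.range_cons, Matrix.range_empty]
    simp [Set.insert_subset_iff, hx, hy]
  simpa [finrank_span_eq_card hxy] using Submodule.finrank_mono hspan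

theorem Submodule.exists_linearIndependent_pair_fst {K M M' : Type*} [DivisionRing K]
    [AddCommGroup M] [Module K M] [AddCommGroup M'] [Module K M'] {N : Submodule K (M × M')}
    [FiniteDimensional K N] (hN : 1 < Module.finrank K N)
    (hS : Disjoint N (LinearMap.ker (LinearMap.fst K M M'))) :
    ∃ x ∈ N, ∃ y ∈ N, LinearIndependent K ![x.1, y.1] := by
  obtain ⟨x, hx⟩ := (Module.finrank_pos_iff_exists_ne_zero (R := K) (M := N)).mp (by omega)
  obtain ⟨y, hxy⟩ := exists_linearIndependent_pair_of_one_lt_finrank hN hx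
  have hspan : Submodule.span K (Set.range (N.subtype ∘ ![x, y])) ≤ N := by
    rw [Submodule.span_le]
    rintro _ ⟨i, rfl⟩
    exact (![x, y] i).2
  refine ⟨x, x.2, y, y.2, ?_⟩
  have := (hxy.map' N.subtype N.ker_subtype).map (hS.mono_left hspan)
  rwa [← FinVec.map_eq, ← FinVec.map_eq] at this

theorem mem_Gc_iff {W : Submodule (ZMod 2) F16} {a0 a1 : F16} {x : ↥W × F16} :
    x ∈ Gc W a0 a1 ↔ x.2 = a0 * x.1 + a1 * (x.1 : F16) ^ 2 :=
  LinearMap.mem_graph_iff _ _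

theorem specialSolid_eq_ker_fst (W : Submodule (ZMod 2) F16) :
    specialSolid W = LinearMap.ker (LinearMap.fst (ZMod 2) W F16) := by
  ext x; simp [specialSolid]

theorem finrank_Gc_le (W : Submodule (ZMod 2) F16) (a0 a1 : F16) :
    Module.finrank (ZMod 2) (Gc W a0 a1) ≤ 4 := by
  calc Module.finrank (ZMod 2) (Gc W a0 a1) = Module.finrank (ZMod 2) W := by
        rw [Gc, LinearMap.graph_eq_range_prod, LinearMap.finrank_range_of_inj]
        intro x y h
        simpa using congrArg Prod.fst h
    _ ≤ Module.finrank (ZMod 2) F16 := Submodule.finrank_le W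
    _ = 4 := GaloisField.finrank 2 (by norm_num)

theorem exists_two_le_finrank_inf_Gc {W : Submodule (ZMod 2) F16}
    {N : Submodule (ZMod 2) (↥W × F16)}
    (hN : 1 < Module.finrank (ZMod 2) N) (hS : N ⊓ specialSolid W = ⊥) :
    ∃ a0 a1 : F16, 2 ≤ Module.finrank (ZMod 2) ↥(N ⊓ Gc W a0 a1) := by
  obtain ⟨x, hxN, y, hyN, hxy⟩ :=
    N.exists_linearIndependent_pair_fst hN (by rwa [disjoint_iff, ← specialSolid_eq_ker_fst])
  have hu : (x.1 : F16) ≠ 0 := by simpa using hxy.ne_zero 0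
  have hv : (y.1 : F16) ≠ 0 := by simpa using hxy.ne_zero 1
  have huv : (x.1 : F16) ≠ y.1 := by simpa using hxy.injective.ne zero_ne_one
  obtain ⟨a0, a1, hx, hy⟩ := exists_mul_add_mul_sq_eq hu hv huv x.2 y.2
  refine ⟨a0, a1, two_le_finrank_of_linearIndependent_pair ⟨hxN, mem_Gc_iff.mpr hx.symm⟩
    ⟨hyN, mem_Gc_iff.mpr hy.symm⟩ (.of_comp (LinearMap.fst _ _ _) ?_)⟩
  rwa [← FinVec.map_eq]

theorem extension_meets_special_solid_general (W : Submodule (ZMod 2) F16)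
    (N : Submodule (ZMod 2) (↥W × F16))
    (hN : Module.finrank (ZMod 2) N = 3)
    (hdist : ∀ a0 a1 : F16,
      4 ≤ Module.finrank (ZMod 2) ↥(N ⊔ Gc W a0 a1) -
            Module.finrank (ZMod 2) ↥(N ⊓ Gc W a0 a1)) :
    1 ≤ Module.finrank (ZMod 2) ↥(N ⊓ specialSolid W) := by
  by_contra! h
  have hS : N ⊓ specialSolid W = ⊥ := Submodule.finrank_eq_zero.mp (by omega)
  obtain ⟨a0, a1, hinf⟩ := exists_two_le_finrank_inf_Gc (by omega) hS
  have hsum := Submodule.finrank_sup_add_finrank_inf_eq N (Gc W a0 a1)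
  have := finrank_Gc_le W a0 a1
  have := hdist a0 a1
  omega

/-- Any plane at subspace distance at least `4` from all codewords of the lifted Gabidulin
code must meet the special solid `S` in at least a point. -/
theorem extension_meets_special_solid (W : Submodule (ZMod 2) F16)
    (hW : Module.finrank (ZMod 2) W = 3) (N : Submodule (ZMod 2) (↥W × F16))
    (hN : Module.finrank (ZMod 2) N = 3)
    (hdist : ∀ a0 a1 : F16,
      4 ≤ Module.finrank (ZMod 2) ↥(N ⊔ Gc W a0 a1) -
            Module.finrank (ZMod 2) ↥(N ⊓ Gc W a0 a1)) :
    1 ≤ Module.finrank (ZMod 2) ↥(N ⊓ specialSolid W) :=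
  extension_meets_special_solid_general W N hN hdist
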